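/- arXiv:2107.14672 — 6 statements merged into one kernel-verified Lean document; each statement's English description precedes it below -/
import Mathlib

section
/- In an optimal schedule for the heterogeneous data-center right-sizing problem, a server never switches lanes: if ŷ_{t-1,k} = j > 0 and ŷ_{t,k} ≠ j, then there is no lane k' ≠ k with ŷ_{t-1,k'} ≠ j and ŷ_{t,k'} = j. -/
open Finset

/-- A schedule `x` (where `x t j` is the number of active servers of type `j` at time `t`)
is feasible for horizon `T`, `d` server types with `m j` servers of type `j`, and job
volumes `lam`: all servers are off at time `0` and after time `T`, the demand is met,
and no more servers are used than available. -/
def Feasible (T d : ℕ) (m lam : ℕ → ℕ) (x : ℕ → ℕ → ℕ) : Prop :=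
  (∀ j, x 0 j = 0) ∧
  (∀ t, T < t → ∀ j, x t j = 0) ∧
  (∀ t ∈ Finset.Icc 1 T, lam t ≤ ∑ j ∈ Finset.Icc 1 d, x t j ∧ ∀ j, x t j ≤ m j)

/-- Total cost of a schedule: operating costs plus switching costs for powering up. -/
noncomputable def cost (T d : ℕ) (β l : ℕ → ℝ) (x : ℕ → ℕ → ℕ) : ℝ :=
  ∑ t ∈ Finset.Icc 1 T, ∑ j ∈ Finset.Icc 1 d,
    (l j * (x t j : ℝ) + β j * ((x t j - x (t - 1) j : ℕ) : ℝ))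

/-- An optimal schedule: feasible and of minimum cost among feasible schedules. -/
def Optimal (T d : ℕ) (m lam : ℕ → ℕ) (β l : ℕ → ℝ) (x : ℕ → ℕ → ℕ) : Prop :=
  Feasible T d m lam x ∧
  ∀ x', Feasible T d m lam x' → cost T d β l x ≤ cost T d β l x'

/-- The lane representation: `lane d x t k` is the server type serving lane `k`
at time `t` (largest `j ∈ [1,d]` with `∑_{j'=j}^{d} x t j' ≥ k`, else `0`). -/
noncomputable def lane (d : ℕ) (x : ℕ → ℕ → ℕ) (t k : ℕ) : ℕ :=
  sSup {j | j ∈ Finset.Icc 1 d ∧ k ≤ ∑ j' ∈ Finset.Icc j d, x t j'}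

/-!
Write `S t i` for the number of servers of type at least `i` active at time `t`; lane `k` has
type `j` at time `t` iff `S t (j + 1) < k ≤ S t j`. If lane `k` leaves type `j` upwards, then
`S · (j + 1)` rises right after a step at which a type-`j` server is active; if it leaves
downwards while lane `k'` enters type `j`, then `S · (j + 1)` falls right before such a step.
Both are impossible in an optimal schedule: take the maximal run of steps around that moment
during which a type-`j` server is active and a type-`p` server (`p > j`, whose count changes
there) is still available, and replace one type-`j` server by a type-`p` server on this run.
The operating cost drops, while neither the number of type-`p` power-ups nor the total number
of power-ups grows, so with `0 ≤ β j ≤ β p` the switching cost does not grow either.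
-/

theorem sum_sub_sum_of_eq_off_pair {ι M : Type*} [AddCommGroup M] {S : Finset ι}
    {f g : ι → M} {i i' : ι} (hi : i ∈ S) (hi' : i' ∈ S) (hne : i ≠ i')
    (h : ∀ q ∈ S, q ≠ i → q ≠ i' → f q = g q) :
    ∑ q ∈ S, f q - ∑ q ∈ S, g q = (f i - g i) + (f i' - g i') := by
  rw [← Finset.sum_sub_distrib]
  exact Finset.sum_eq_add_of_mem i i' hi hi' hne fun q hq hq' =>
    sub_eq_zero.2 (h q hq hq'.1 hq'.2)

section Lane

variable {d : ℕ} {x : ℕ → ℕ → ℕ} {t k j : ℕ}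

theorem lane_le : lane d x t k ≤ d :=
  csSup_le' fun _ hi => (Finset.mem_Icc.1 hi.1).2

theorem lane_zero : lane d x t 0 = d := by
  refine le_antisymm lane_le ?_
  rcases Nat.eq_zero_or_pos d with rfl | hd
  · exact Nat.zero_le _
  · exact le_csSup ⟨d, fun _ hi => (Finset.mem_Icc.1 hi.1).2⟩
      ⟨Finset.mem_Icc.2 ⟨hd, le_rfl⟩, Nat.zero_le _⟩

theorem lane_eq_iff (hj : 1 ≤ j) (hjd : j ≤ d) (hk : 0 < k) :
    lane d x t k = j ↔
      ∑ i ∈ Finset.Icc (j + 1) d, x t i < k ∧ k ≤ ∑ i ∈ Finset.Icc j d, x t i := by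
  have hbdd : BddAbove {i | i ∈ Finset.Icc 1 d ∧ k ≤ ∑ i' ∈ Finset.Icc i d, x t i'} :=
    ⟨d, fun _ hi => (Finset.mem_Icc.1 hi.1).2⟩
  have htail : ∀ {i i'}, i ≤ i' →
      ∑ q ∈ Finset.Icc i' d, x t q ≤ ∑ q ∈ Finset.Icc i d, x t q := fun h =>
    Finset.sum_le_sum_of_subset (Finset.Icc_subset_Icc_left h)
  constructor
  · intro h
    have hne : {i | i ∈ Finset.Icc 1 d ∧ k ≤ ∑ i' ∈ Finset.Icc i d, x t i'}.Nonempty := by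
      by_contra hemp
      rw [Set.not_nonempty_iff_eq_empty] at hemp
      simp only [lane, hemp, csSup_empty, bot_eq_zero] at h
      omega
    have hmem := Nat.sSup_mem hne hbdd
    rw [← lane, h] at hmem
    refine ⟨?_, hmem.2⟩
    by_contra! hnext
    have hjd' : j + 1 ≤ d := by
      by_contra hd
      rw [Finset.Icc_eq_empty (by omega), Finset.sum_empty] at hnext
      omega
    have := le_csSup hbdd ⟨Finset.mem_Icc.2 ⟨by omega, hjd'⟩, hnext⟩
    rw [← lane, h] at this
    omega
  · rintro ⟨hnext, hcur⟩
    refine le_antisymm (csSup_le' fun i hi => ?_)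
      (le_csSup hbdd ⟨Finset.mem_Icc.2 ⟨hj, hjd⟩, hcur⟩)
    by_contra! hij
    exact absurd (hi.2.trans (htail hij)) (not_le.2 hnext)

theorem pos_of_lane_eq_of_ne {t' : ℕ} (h : lane d x t k = j) (h' : lane d x t' k ≠ j) : 0 < k :=
  Nat.pos_of_ne_zero fun hk => h' (by rw [hk, lane_zero] at h ⊢; exact h)

end Lane

section Runs

variable {G : ℕ → Prop}

theorem exists_run_start : ∀ {s : ℕ}, 1 ≤ s → G s →
    ∃ a, 1 ≤ a ∧ a ≤ s ∧ (∀ r ∈ Set.Icc a s, G r) ∧ (a = 1 ∨ ¬ G (a - 1))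
  | s + 1, _, hG => by
    by_cases hs : 1 ≤ s ∧ G s
    · obtain ⟨a, ha, has, hrun, hstart⟩ := exists_run_start hs.1 hs.2
      refine ⟨a, ha, by omega, fun r hr => ?_, hstart⟩
      rcases Nat.lt_or_ge r (s + 1) with h | h
      · exact hrun r ⟨hr.1, by omega⟩
      · rwa [le_antisymm hr.2 h]
    · refine ⟨s + 1, by omega, le_rfl, fun r hr => ?_, ?_⟩
      · rwa [le_antisymm hr.2 hr.1]
      · rcases Nat.eq_zero_or_pos s with rfl | hs0
        · exact Or.inl rfl
        · exact Or.inr fun h => hs ⟨hs0, h⟩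

theorem exists_run_end {T : ℕ} {s : ℕ} (hsT : s ≤ T) (hG : G s) :
    ∃ b, s ≤ b ∧ b ≤ T ∧ (∀ r ∈ Set.Icc s b, G r) ∧ (b = T ∨ ¬ G (b + 1)) := by
  induction h : T - s generalizing s with
  | zero =>
    exact ⟨s, le_rfl, hsT, fun r hr => by rwa [le_antisymm hr.2 hr.1], Or.inl (by omega)⟩
  | succ n ih =>
    by_cases hG' : G (s + 1)
    · obtain ⟨b, hsb, hbT, hrun, hend⟩ := ih (by omega) hG' (by omega)
      refine ⟨b, by omega, hbT, fun r hr => ?_, hend⟩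
      rcases Nat.lt_or_ge s r with h | h
      · exact hrun r ⟨h, hr.2⟩
      · rwa [le_antisymm h hr.1]
    · exact ⟨s, le_rfl, hsT, fun r hr => by rwa [le_antisymm hr.2 hr.1], Or.inr hG'⟩

end Runs

def upCount (T : ℕ) (y : ℕ → ℕ) : ℕ :=
  ∑ s ∈ Finset.Icc 1 T, (y s - y (s - 1))

theorem upCount_add_indicator {T a b : ℕ} {y : ℕ → ℕ} (ha : 1 ≤ a) (hab : a ≤ b)
    (hbT : b ≤ T) (hy : y (T + 1) = 0) :
    upCount T (y + (Set.Icc a b).indicator 1) + (if y b < y (b + 1) then 1 else 0) =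
      upCount T y + (if y (a - 1) ≤ y a then 1 else 0) := by
  set y' := y + (Set.Icc a b).indicator 1 with hy'
  have hval : ∀ s, y' s = y s + if a ≤ s ∧ s ≤ b then 1 else 0 := fun s => by
    simp only [hy', Pi.add_apply, Set.indicator_apply, Set.mem_Icc, Pi.one_apply]
  have key : (upCount T y' : ℤ) - upCount T y =
      (((y' a - y' (a - 1) : ℕ) : ℤ) - (y a - y (a - 1) : ℕ)) +
      (((y' (b + 1) - y' (b + 1 - 1) : ℕ) : ℤ) - (y (b + 1) - y (b + 1 - 1) : ℕ)) := by
    simp only [upCount, Nat.cast_sum, ← Finset.sum_sub_distrib]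
    refine Finset.sum_eq_add a (b + 1) (by omega) (fun s _ hs => ?_) (fun h => ?_) (fun h => ?_)
    · rw [hval, hval]; split_ifs <;> omega
    · exact absurd (Finset.mem_Icc.2 ⟨ha, by omega⟩) h
    · have : b = T := by simp only [Finset.mem_Icc, not_and_or] at h; omega
      subst this
      rw [hval, hval, hy]; split_ifs <;> omega
  rw [Nat.add_sub_cancel, hval, hval, hval, hval] at key
  split_ifs at key ⊢ <;> omega

theorem cost_eq_sum_upCount (T d : ℕ) (β l : ℕ → ℝ) (x : ℕ → ℕ → ℕ) :
    cost T d β l x = ∑ q ∈ Finset.Icc 1 d,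
      (l q * ((∑ s ∈ Finset.Icc 1 T, x s q : ℕ) : ℝ) + β q * upCount T (fun s => x s q)) := by
  rw [cost, Finset.sum_comm]
  simp only [upCount, Nat.cast_sum, Finset.mul_sum, Finset.sum_add_distrib]

noncomputable def moveServer (x : ℕ → ℕ → ℕ) (j p a b : ℕ) (s q : ℕ) : ℕ :=
  if q = p then x s q + (Set.Icc a b).indicator 1 s
  else if q = j then x s q - (Set.Icc a b).indicator 1 s
  else x s q

section MoveServer

variable {T d : ℕ} {m lam : ℕ → ℕ} {x : ℕ → ℕ → ℕ} {j p a b : ℕ}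

theorem moveServer_of_notMem {s : ℕ} (hs : s ∉ Set.Icc a b) (q : ℕ) :
    moveServer x j p a b s q = x s q := by
  simp [moveServer, Set.indicator_of_notMem hs]

theorem moveServer_of_ne {q : ℕ} (hqj : q ≠ j) (hqp : q ≠ p) (s : ℕ) :
    moveServer x j p a b s q = x s q := by
  simp [moveServer, hqj, hqp]

theorem moveServer_new (s : ℕ) :
    moveServer x j p a b s p = x s p + (Set.Icc a b).indicator 1 s := by
  simp [moveServer]

theorem moveServer_old (hjp : j ≠ p) (s : ℕ) :
    moveServer x j p a b s j = x s j - (Set.Icc a b).indicator 1 s := by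
  simp [moveServer, hjp]

theorem moveServer_old_add (hjp : j ≠ p) (hrun : ∀ s ∈ Set.Icc a b, 1 ≤ x s j) :
    (fun s => moveServer x j p a b s j) + (Set.Icc a b).indicator 1 = fun s => x s j := by
  funext s
  by_cases hs : s ∈ Set.Icc a b
  · simp only [Pi.add_apply, moveServer_old hjp, Set.indicator_of_mem hs, Pi.one_apply]
    have := hrun s hs
    omega
  · simp [moveServer_of_notMem hs, Set.indicator_of_notMem hs]

theorem feasible_moveServer (hx : Feasible T d m lam x) (hj : j ∈ Finset.Icc 1 d)
    (hp : p ∈ Finset.Icc 1 d) (hjp : j ≠ p) (ha : 1 ≤ a) (hbT : b ≤ T)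
    (hrun : ∀ s ∈ Set.Icc a b, 1 ≤ x s j ∧ x s p < m p) :
    Feasible T d m lam (moveServer x j p a b) := by
  obtain ⟨hx0, hxT, hxC⟩ := hx
  refine ⟨fun q => ?_, fun s hs q => ?_, fun s hs => ⟨?_, fun q => ?_⟩⟩
  · rw [moveServer_of_notMem (by simp only [Set.mem_Icc]; omega), hx0]
  · rw [moveServer_of_notMem (by simp only [Set.mem_Icc]; omega), hxT s hs]
  · by_cases hsr : s ∈ Set.Icc a b
    · have hsum := sum_sub_sum_of_eq_off_pair (S := Finset.Icc 1 d)
        (f := fun q => (moveServer x j p a b s q : ℤ)) (g := fun q => (x s q : ℤ)) hj hp hjp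
        fun q _ hqj hqp => by simp only [moveServer_of_ne hqj hqp]
      simp only [moveServer_new, moveServer_old hjp, Set.indicator_of_mem hsr, Pi.one_apply]
        at hsum
      have := (hxC s hs).1
      have := (hrun s hsr).1
      rw [← Nat.cast_sum, ← Nat.cast_sum] at hsum
      omega
    · simpa only [moveServer_of_notMem hsr] using (hxC s hs).1
  · by_cases hsr : s ∈ Set.Icc a b
    · by_cases hqp : q = p
      · subst hqp
        rw [moveServer_new, Set.indicator_of_mem hsr]
        exact (hrun s hsr).2
      by_cases hqj : q = j
      · subst hqj
        rw [moveServer_old hjp]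
        exact (Nat.sub_le _ _).trans ((hxC s hs).2 q)
      · rw [moveServer_of_ne hqj hqp]
        exact (hxC s hs).2 q
    · rw [moveServer_of_notMem hsr]
      exact (hxC s hs).2 q

theorem sum_indicator_Icc {T a b : ℕ} (ha : 1 ≤ a) (hbT : b ≤ T) :
    ∑ s ∈ Finset.Icc 1 T, (Set.Icc a b).indicator 1 s = b + 1 - a := by
  rw [← Finset.coe_Icc, Finset.sum_indicator_subset _ (Finset.Icc_subset_Icc ha hbT)]
  simp

theorem upCount_moveServer_le (hx : Feasible T d m lam x) (hjp : j ≠ p) (ha : 1 ≤ a)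
    (hab : a ≤ b) (hbT : b ≤ T) (hrun : ∀ s ∈ Set.Icc a b, 1 ≤ x s j)
    (hleft : x (a - 1) j = 0 ∨ x a p < x (a - 1) p)
    (hright : x (b + 1) j = 0 ∨ x b p < x (b + 1) p)
    (hdesc : x a p < x (a - 1) p ∨ x b p < x (b + 1) p) :
    upCount T (fun s => moveServer x j p a b s p) ≤ upCount T (fun s => x s p) ∧
      upCount T (fun s => moveServer x j p a b s p) +
          upCount T (fun s => moveServer x j p a b s j) ≤
        upCount T (fun s => x s p) + upCount T (fun s => x s j) := by
  have hend : T + 1 ∉ Set.Icc a b := fun h => by simp only [Set.mem_Icc] at h; omega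
  have hP := upCount_add_indicator (y := fun s => x s p) ha hab hbT (hx.2.1 _ (by omega) p)
  have hJ := upCount_add_indicator (y := fun s => moveServer x j p a b s j) ha hab hbT
    (by rw [moveServer_of_notMem hend]; exact hx.2.1 _ (by omega) j)
  rw [moveServer_old_add hjp hrun] at hJ
  have hnew :
      (fun s => x s p) + (Set.Icc a b).indicator 1 = fun s => moveServer x j p a b s p :=
    funext fun s => (moveServer_new s).symm
  rw [hnew] at hP
  have hbefore : a - 1 ∉ Set.Icc a b := fun h => by simp only [Set.mem_Icc] at h; omega
  have hafter : b + 1 ∉ Set.Icc a b := fun h => by simp only [Set.mem_Icc] at h; omega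
  have hxa := hrun a ⟨le_rfl, hab⟩
  have hxb := hrun b ⟨hab, le_rfl⟩
  simp only [moveServer_of_notMem hbefore, moveServer_of_notMem hafter, moveServer_old hjp a,
    moveServer_old hjp b, Set.indicator_of_mem (Set.mem_Icc.2 ⟨le_rfl, hab⟩),
    Set.indicator_of_mem (Set.mem_Icc.2 ⟨hab, le_rfl⟩), Pi.one_apply] at hJ
  split_ifs at hP hJ <;> omega

theorem cost_moveServer_lt {β l : ℕ → ℝ} (hl : l p < l j) (hβ : β j ≤ β p) (hβj : 0 ≤ β j)
    (hx : Feasible T d m lam x) (hj : j ∈ Finset.Icc 1 d) (hp : p ∈ Finset.Icc 1 d)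
    (hjp : j ≠ p) (ha : 1 ≤ a) (hab : a ≤ b) (hbT : b ≤ T)
    (hrun : ∀ s ∈ Set.Icc a b, 1 ≤ x s j)
    (hleft : x (a - 1) j = 0 ∨ x a p < x (a - 1) p)
    (hright : x (b + 1) j = 0 ∨ x b p < x (b + 1) p)
    (hdesc : x a p < x (a - 1) p ∨ x b p < x (b + 1) p) :
    cost T d β l (moveServer x j p a b) < cost T d β l x := by
  rw [← sub_neg, cost_eq_sum_upCount, cost_eq_sum_upCount,
    sum_sub_sum_of_eq_off_pair hj hp hjp fun q _ hqj hqp => by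
      simp only [moveServer_of_ne hqj hqp]]
  have hopsP : ∑ s ∈ Finset.Icc 1 T, moveServer x j p a b s p =
      ∑ s ∈ Finset.Icc 1 T, x s p + (b + 1 - a) := by
    simp only [moveServer_new, Finset.sum_add_distrib, sum_indicator_Icc ha hbT]
  have hopsJ : ∑ s ∈ Finset.Icc 1 T, x s j =
      ∑ s ∈ Finset.Icc 1 T, moveServer x j p a b s j + (b + 1 - a) := by
    rw [← moveServer_old_add hjp hrun]
    simp only [Pi.add_apply, Finset.sum_add_distrib, sum_indicator_Icc ha hbT]
  obtain ⟨hUp, hUpj⟩ := upCount_moveServer_le hx hjp ha hab hbT hrun hleft hright hdesc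
  have hUp' := (Nat.cast_le (α := ℝ)).2 hUp
  have hUpj' := (Nat.cast_le (α := ℝ)).2 hUpj
  rw [hopsP, hopsJ]
  push_cast at hUpj' ⊢
  have hswitchJ := mul_nonpos_of_nonneg_of_nonpos hβj (sub_nonpos.2 hUpj')
  have hswitchP := mul_nonpos_of_nonneg_of_nonpos (sub_nonneg.2 hβ) (sub_nonpos.2 hUp')
  have hrun_len : (0 : ℝ) < (b + 1 - a : ℕ) := by exact_mod_cast (by omega : 0 < b + 1 - a)
  have hops := mul_neg_of_neg_of_pos (sub_neg.2 hl) hrun_len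
  linarith

end MoveServer

section Optimal

variable {T d : ℕ} {m lam : ℕ → ℕ} {β l : ℕ → ℝ} {x : ℕ → ℕ → ℕ} {j p : ℕ}

theorem Feasible.mem_Icc_of_ne_zero (hx : Feasible T d m lam x) {s q : ℕ} (h : x s q ≠ 0) :
    s ∈ Finset.Icc 1 T := by
  refine Finset.mem_Icc.2 ⟨Nat.one_le_iff_ne_zero.2 fun hs => h ?_, not_lt.1 fun hs => h ?_⟩
  · rw [hs, hx.1]
  · exact hx.2.1 s hs q

theorem Feasible.le_of_ne_zero (hx : Feasible T d m lam x) {s q : ℕ} (h : x s q ≠ 0) :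
    x s q ≤ m q :=
  (hx.2.2 s (hx.mem_Icc_of_ne_zero h)).2 q

theorem Optimal.le_of_active_before (hopt : Optimal T d m lam β l x) (hj : 1 ≤ j) (hjp : j < p)
    (hpd : p ≤ d) (hl : l p < l j) (hβ : β j ≤ β p) (hβj : 0 ≤ β j) {s : ℕ}
    (hs : 1 ≤ x s j) : x (s + 1) p ≤ x s p := by
  by_contra! hrise
  obtain ⟨hx, hmin⟩ := hopt
  have hs1 : 1 ≤ s := Finset.mem_Icc.1 (hx.mem_Icc_of_ne_zero (q := j) (by omega)) |>.1
  have hsT : s + 1 ≤ T := Finset.mem_Icc.1 (hx.mem_Icc_of_ne_zero (q := p) (by omega)) |>.2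
  obtain ⟨a, ha, has, hrun, hstart⟩ := exists_run_start (G := fun r => 1 ≤ x r j ∧ x r p < m p)
    hs1 ⟨hs, hrise.trans_le (hx.le_of_ne_zero (by omega))⟩
  have hleft : x (a - 1) j = 0 ∨ x a p < x (a - 1) p := by
    rcases hstart with rfl | hstop
    · exact Or.inl (hx.1 j)
    · by_contra! h
      exact hstop ⟨Nat.one_le_iff_ne_zero.2 h.1, h.2.trans_lt (hrun a ⟨le_rfl, has⟩).2⟩
  have hjmem : j ∈ Finset.Icc 1 d := Finset.mem_Icc.2 ⟨hj, by omega⟩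
  have hpmem : p ∈ Finset.Icc 1 d := Finset.mem_Icc.2 ⟨by omega, hpd⟩
  exact (hmin _ (feasible_moveServer hx hjmem hpmem hjp.ne ha (by omega) hrun)).not_gt
    (cost_moveServer_lt hl hβ hβj hx hjmem hpmem hjp.ne ha has (by omega)
      (fun r hr => (hrun r hr).1) hleft (Or.inr hrise) (Or.inr hrise))

theorem Optimal.le_of_active_after (hopt : Optimal T d m lam β l x) (hj : 1 ≤ j) (hjp : j < p)
    (hpd : p ≤ d) (hl : l p < l j) (hβ : β j ≤ β p) (hβj : 0 ≤ β j) {s : ℕ}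
    (hs : 1 ≤ x (s + 1) j) : x s p ≤ x (s + 1) p := by
  by_contra! hfall
  obtain ⟨hx, hmin⟩ := hopt
  have hsT : s + 1 ≤ T := Finset.mem_Icc.1 (hx.mem_Icc_of_ne_zero (q := j) (by omega)) |>.2
  obtain ⟨b, hsb, hbT, hrun, hstop⟩ := exists_run_end (G := fun r => 1 ≤ x r j ∧ x r p < m p)
    hsT ⟨hs, hfall.trans_le (hx.le_of_ne_zero (by omega))⟩
  have hright : x (b + 1) j = 0 ∨ x b p < x (b + 1) p := by
    rcases hstop with rfl | hstop
    · exact Or.inl (hx.2.1 _ (by omega) j)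
    · by_contra! h
      exact hstop ⟨Nat.one_le_iff_ne_zero.2 h.1, h.2.trans_lt (hrun b ⟨hsb, le_rfl⟩).2⟩
  have hleft : x (s + 1) p < x (s + 1 - 1) p := by rwa [Nat.add_sub_cancel]
  have hjmem : j ∈ Finset.Icc 1 d := Finset.mem_Icc.2 ⟨hj, by omega⟩
  have hpmem : p ∈ Finset.Icc 1 d := Finset.mem_Icc.2 ⟨by omega, hpd⟩
  exact (hmin _ (feasible_moveServer hx hjmem hpmem hjp.ne (by omega) hbT hrun)).not_gt
    (cost_moveServer_lt hl hβ hβj hx hjmem hpmem hjp.ne (by omega) hsb hbT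
      (fun r hr => (hrun r hr).1) (Or.inr hleft) hright (Or.inl hleft))

theorem Optimal.sum_higher_succ_le (hopt : Optimal T d m lam β l x) (hj : 1 ≤ j)
    (hcost : ∀ p ∈ Finset.Icc (j + 1) d, l p < l j ∧ β j ≤ β p) (hβj : 0 ≤ β j) {s : ℕ}
    (hs : 1 ≤ x s j) :
    ∑ i ∈ Finset.Icc (j + 1) d, x (s + 1) i ≤ ∑ i ∈ Finset.Icc (j + 1) d, x s i :=
  Finset.sum_le_sum fun p hp => hopt.le_of_active_before hj (Finset.mem_Icc.1 hp).1
    (Finset.mem_Icc.1 hp).2 (hcost p hp).1 (hcost p hp).2 hβj hs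

theorem Optimal.sum_higher_le_succ (hopt : Optimal T d m lam β l x) (hj : 1 ≤ j)
    (hcost : ∀ p ∈ Finset.Icc (j + 1) d, l p < l j ∧ β j ≤ β p) (hβj : 0 ≤ β j) {s : ℕ}
    (hs : 1 ≤ x (s + 1) j) :
    ∑ i ∈ Finset.Icc (j + 1) d, x s i ≤ ∑ i ∈ Finset.Icc (j + 1) d, x (s + 1) i :=
  Finset.sum_le_sum fun p hp => hopt.le_of_active_after hj (Finset.mem_Icc.1 hp).1
    (Finset.mem_Icc.1 hp).2 (hcost p hp).1 (hcost p hp).2 hβj hs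

end Optimal

theorem no_lane_switching_general (T d : ℕ) (m lam : ℕ → ℕ) (β l : ℕ → ℝ)
    (hl : ∀ j j', 1 ≤ j → j < j' → j' ≤ d → l j' < l j)
    (hβ : ∀ j j', 1 ≤ j → j < j' → j' ≤ d → β j < β j')
    (hβ0 : ∀ j, 1 ≤ j → j ≤ d → 0 < β j)
    (x : ℕ → ℕ → ℕ) (hopt : Optimal T d m lam β l x)
    (t k j : ℕ)
    (hprev : lane d x (t - 1) k = j) (hj : 0 < j) (hcur : lane d x t k ≠ j) :
    ¬ ∃ k', k' ≠ k ∧ lane d x (t - 1) k' ≠ j ∧ lane d x t k' = j := by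
  rintro ⟨k', -, hk'prev, hk'cur⟩
  obtain _ | s := t
  · exact hcur hprev
  rw [Nat.add_sub_cancel] at hprev hk'prev
  have hjd : j ≤ d := hprev ▸ lane_le
  have hk := pos_of_lane_eq_of_ne hprev hcur
  have hk' := pos_of_lane_eq_of_ne hk'cur hk'prev
  rw [lane_eq_iff hj hjd hk] at hprev
  rw [ne_eq, lane_eq_iff hj hjd hk] at hcur
  rw [lane_eq_iff hj hjd hk'] at hk'cur
  rw [ne_eq, lane_eq_iff hj hjd hk'] at hk'prev
  have hcost : ∀ p ∈ Finset.Icc (j + 1) d, l p < l j ∧ β j ≤ β p := fun p hp => by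
    obtain ⟨hjp, hpd⟩ := Finset.mem_Icc.1 hp
    exact ⟨hl j p hj hjp hpd, (hβ j p hj hjp hpd).le⟩
  have hβj := (hβ0 j hj hjd).le
  have hsplit : ∀ r, ∑ i ∈ Finset.Icc j d, x r i = x r j + ∑ i ∈ Finset.Icc (j + 1) d, x r i :=
    fun r => by rw [← Finset.add_sum_Ioc_eq_sum_Icc hjd, Finset.Icc_add_one_left_eq_Ioc]
  have := hsplit s
  have := hsplit (s + 1)
  by_cases hup : k ≤ ∑ i ∈ Finset.Icc (j + 1) d, x (s + 1) i
  · have := hopt.sum_higher_succ_le hj hcost hβj (s := s) (by omega)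
    omega
  · have := hopt.sum_higher_le_succ hj hcost hβj (s := s) (by omega)
    omega

/-- In an optimal schedule, a server never switches lanes: if the server
type in lane `k` at time `t-1` is `j > 0` and the type at time `t` differs from `j`,
then no other lane `k'` has type `≠ j` at time `t-1` and type `j` at time `t`.
Hypotheses: operating costs strictly decreasing and nonnegative, switching costs
strictly increasing and positive, on server types `1,…,d`. -/
theorem no_lane_switching (T d : ℕ) (m lam : ℕ → ℕ) (β l : ℕ → ℝ)
    (hl : ∀ j j', 1 ≤ j → j < j' → j' ≤ d → l j' < l j)
    (hl0 : ∀ j, 1 ≤ j → j ≤ d → 0 ≤ l j)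
    (hβ : ∀ j j', 1 ≤ j → j < j' → j' ≤ d → β j < β j')
    (hβ0 : ∀ j, 1 ≤ j → j ≤ d → 0 < β j)
    (x : ℕ → ℕ → ℕ) (hopt : Optimal T d m lam β l x)
    (t k j : ℕ) (ht1 : 1 ≤ t) (htT : t ≤ T)
    (hprev : lane d x (t - 1) k = j) (hj : 0 < j) (hcur : lane d x t k ≠ j) :
    ¬ ∃ k', k' ≠ k ∧ lane d x (t - 1) k' ≠ j ∧ lane d x t k' = j :=
  no_lane_switching_general T d m lam β l hl hβ hβ0 x hopt t k j hprev hj hcur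
end

section
/- In an optimal schedule, if a server is powered down in lane k after time t-1 (ŷ_{t-1,k} > 0 and ŷ_{t,k} = 0), then there was a job in lane k at time t-1 and no job at time t, i.e., λ_{t-1} ≥ k and λ_t < k. Symmetrically, if ŷ_{t-1,k} = 0 and ŷ_{t,k} > 0, then λ_{t-1} < k and λ_t ≥ k. -/
/-!
An optimal schedule has no slack wherever some server count is not a local minimum in time:
if `x s j` exceeds `x (s - 1) j` or `x (s + 1) j`, then switching one type-`j` server off at
time `s` saves the operating cost `l j > 0` without adding switching cost, so it must break
feasibility, i.e. the `∑ⱼ x s j` active servers exactly meet the demand `λ_s`. Lane `k` is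
served at time `t` iff at least `k` servers are active, so when it switches off after `t - 1`
the total drops below `k` at `t`, and at `t - 1` the demand equals the total, which is at least
`k`; symmetrically when it switches on.
-/

open Finset

lemma lane_pos_iff (d : ℕ) (x : ℕ → ℕ → ℕ) (t k : ℕ) :
    0 < lane d x t k ↔ 1 ≤ d ∧ k ≤ ∑ j ∈ Icc 1 d, x t j := by
  set S := {j | j ∈ Icc 1 d ∧ k ≤ ∑ j' ∈ Icc j d, x t j'}
  have hbdd : BddAbove S := ⟨d, fun j hj => (mem_Icc.1 hj.1).2⟩
  change 0 < sSup S ↔ _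
  constructor
  · intro hpos
    have hne : S.Nonempty :=
      S.eq_empty_or_nonempty.resolve_left fun h => by simp [h] at hpos
    obtain ⟨hj, hk⟩ := Nat.sSup_mem hne hbdd
    obtain ⟨hj1, hjd⟩ := mem_Icc.1 hj
    exact ⟨hj1.trans hjd, hk.trans (sum_le_sum_of_subset (Icc_subset_Icc_left hj1))⟩
  · rintro ⟨hd, hk⟩
    exact one_pos.trans_le (le_csSup hbdd ⟨mem_Icc.2 ⟨le_rfl, hd⟩, hk⟩)

lemma sum_lt_of_lane_eq_zero {d : ℕ} {x : ℕ → ℕ → ℕ} {t k : ℕ} (hd : 1 ≤ d)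
    (h : lane d x t k = 0) : ∑ j ∈ Icc 1 d, x t j < k := by
  by_contra! hk
  exact ((lane_pos_iff d x t k).2 ⟨hd, hk⟩).ne' h

noncomputable def typeCost (T : ℕ) (β l : ℝ) (y : ℕ → ℕ) : ℝ :=
  ∑ t ∈ Icc 1 T, (l * (y t : ℝ) + β * ((y t - y (t - 1) : ℕ) : ℝ))

lemma cost_eq_sum_typeCost (T d : ℕ) (β l : ℕ → ℝ) (x : ℕ → ℕ → ℕ) :
    cost T d β l x = ∑ j ∈ Icc 1 d, typeCost T (β j) (l j) (fun t => x t j) :=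
  sum_comm

section OneType

variable {T s : ℕ} {y : ℕ → ℕ}

lemma sum_update_pred_lt (hs : s ∈ Icc 1 T) (hy : 0 < y s) :
    ∑ t ∈ Icc 1 T, Function.update y s (y s - 1) t < ∑ t ∈ Icc 1 T, y t :=
  sum_lt_sum (fun t _ => by rcases eq_or_ne t s with rfl | h <;> simp [*])
    ⟨s, hs, by rw [Function.update_self]; omega⟩

lemma switch_update_pred_add_le (hs : 1 ≤ s) (hy : y (s - 1) < y s) (t : ℕ) :
    Function.update y s (y s - 1) t - Function.update y s (y s - 1) (t - 1)
        + (if t = s then 1 else 0) ≤ y t - y (t - 1) + (if t = s + 1 then 1 else 0) := by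
  rcases eq_or_ne t s with rfl | h₁
  · simp [show t - 1 ≠ t by omega]; omega
  rcases eq_or_ne t (s + 1) with rfl | h₂
  · simp; omega
  · simp [h₁, h₂, show t - 1 ≠ s by omega]

lemma switch_update_pred_le (hs : 1 ≤ s) (hy : y (s + 1) < y s) (t : ℕ) :
    Function.update y s (y s - 1) t - Function.update y s (y s - 1) (t - 1)
      ≤ y t - y (t - 1) := by
  rcases eq_or_ne t s with rfl | h₁
  · simp [show t - 1 ≠ t by omega]; omega
  rcases eq_or_ne t (s + 1) with rfl | h₂
  · simp; omega
  · simp [h₁, show t - 1 ≠ s by omega]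

lemma sum_switches_update_pred_le (hs : s ∈ Icc 1 T) (hy : y (s - 1) < y s ∨ y (s + 1) < y s) :
    ∑ t ∈ Icc 1 T, (Function.update y s (y s - 1) t - Function.update y s (y s - 1) (t - 1))
      ≤ ∑ t ∈ Icc 1 T, (y t - y (t - 1)) := by
  have hs1 := (mem_Icc.1 hs).1
  rcases hy with hprev | hnext
  · -- The power-up saved at `s` pays for the one possibly added at `s + 1`.
    have key := sum_le_sum fun t (_ : t ∈ Icc 1 T) => switch_update_pred_add_le hs1 hprev t
    rw [sum_add_distrib, sum_add_distrib, sum_ite_eq', sum_ite_eq', if_pos hs] at key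
    split_ifs at key <;> omega
  · exact sum_le_sum fun t _ => switch_update_pred_le hs1 hnext t

lemma typeCost_update_pred_lt {β l : ℝ} (hl : 0 < l) (hβ : 0 ≤ β) (hs : s ∈ Icc 1 T)
    (hy : y (s - 1) < y s ∨ y (s + 1) < y s) :
    typeCost T β l (Function.update y s (y s - 1)) < typeCost T β l y := by
  have hpos : 0 < y s := by omega
  simp only [typeCost, sum_add_distrib, ← mul_sum, ← Nat.cast_sum]
  exact add_lt_add_of_lt_of_le
    (mul_lt_mul_of_pos_left (by exact_mod_cast sum_update_pred_lt hs hpos) hl)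
    (mul_le_mul_of_nonneg_left (by exact_mod_cast sum_switches_update_pred_le hs hy) hβ)

end OneType

def dropServer (x : ℕ → ℕ → ℕ) (s j₀ : ℕ) : ℕ → ℕ → ℕ :=
  fun t j => if t = s ∧ j = j₀ then x t j - 1 else x t j

section DropServer

variable {T d s j₀ : ℕ} {m lam : ℕ → ℕ} {β l : ℕ → ℝ} {x : ℕ → ℕ → ℕ}

lemma dropServer_le (t j : ℕ) : dropServer x s j₀ t j ≤ x t j := by
  unfold dropServer
  split_ifs <;> omega

lemma dropServer_of_ne_time {t : ℕ} (h : t ≠ s) (j : ℕ) :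
    dropServer x s j₀ t j = x t j := by
  simp [dropServer, h]

lemma dropServer_column_of_ne {j : ℕ} (h : j ≠ j₀) :
    (fun t => dropServer x s j₀ t j) = fun t => x t j := by
  simp [dropServer, h]

lemma dropServer_column_self :
    (fun t => dropServer x s j₀ t j₀) =
      Function.update (fun t => x t j₀) s (x s j₀ - 1) := by
  funext t
  by_cases h : t = s <;> simp [dropServer, h]

lemma sum_le_sum_dropServer_add_one (S : Finset ℕ) (t : ℕ) :
    ∑ j ∈ S, x t j ≤ ∑ j ∈ S, dropServer x s j₀ t j + 1 :=
  calc ∑ j ∈ S, x t j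
      ≤ ∑ j ∈ S, (dropServer x s j₀ t j + if j = j₀ then 1 else 0) :=
        sum_le_sum fun j _ => by unfold dropServer; split_ifs <;> omega
    _ ≤ ∑ j ∈ S, dropServer x s j₀ t j + 1 := by
        rw [sum_add_distrib, sum_ite_eq']
        split_ifs <;> omega

lemma Feasible.dropServer (hx : Feasible T d m lam x) (hslack : lam s < ∑ j ∈ Icc 1 d, x s j) :
    Feasible T d m lam (dropServer x s j₀) := by
  obtain ⟨hstart, hend, hdemand⟩ := hx
  refine ⟨fun j => Nat.eq_zero_of_le_zero ((dropServer_le 0 j).trans (hstart j).le),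
    fun t ht j => Nat.eq_zero_of_le_zero ((dropServer_le t j).trans (hend t ht j).le),
    fun t ht => ⟨?_, fun j => (dropServer_le t j).trans ((hdemand t ht).2 j)⟩⟩
  rcases eq_or_ne t s with rfl | hts
  · have := sum_le_sum_dropServer_add_one (x := x) (s := t) (j₀ := j₀) (Icc 1 d) t
    omega
  · simpa only [dropServer_of_ne_time hts] using (hdemand t ht).1

lemma cost_dropServer_lt (hl : 0 < l j₀) (hβ : 0 ≤ β j₀) (hj₀ : j₀ ∈ Icc 1 d)
    (hs : s ∈ Icc 1 T) (hx : x (s - 1) j₀ < x s j₀ ∨ x (s + 1) j₀ < x s j₀) :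
    cost T d β l (dropServer x s j₀) < cost T d β l x := by
  have hcol := dropServer_column_self (x := x) (s := s) (j₀ := j₀) ▸
    typeCost_update_pred_lt hl hβ hs hx
  rw [cost_eq_sum_typeCost, cost_eq_sum_typeCost]
  refine sum_lt_sum (fun j _ => ?_) ⟨j₀, hj₀, hcol⟩
  by_cases h : j = j₀
  · exact h ▸ hcol.le
  · rw [dropServer_column_of_ne h]

lemma Optimal.sum_le_demand (hopt : Optimal T d m lam β l x)
    (hl0 : ∀ j, 1 ≤ j → j ≤ d → 0 < l j) (hβ0 : ∀ j, 1 ≤ j → j ≤ d → 0 < β j)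
    (hs : s ∈ Icc 1 T)
    (hx : ∑ j ∈ Icc 1 d, x (s - 1) j < ∑ j ∈ Icc 1 d, x s j ∨
      ∑ j ∈ Icc 1 d, x (s + 1) j < ∑ j ∈ Icc 1 d, x s j) :
    ∑ j ∈ Icc 1 d, x s j ≤ lam s := by
  obtain ⟨j₀, hj₀, hj₀x⟩ :
      ∃ j ∈ Icc 1 d, x (s - 1) j < x s j ∨ x (s + 1) j < x s j := by
    rcases hx with h | h
    · obtain ⟨j, hj, hlt⟩ := exists_lt_of_sum_lt h
      exact ⟨j, hj, Or.inl hlt⟩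
    · obtain ⟨j, hj, hlt⟩ := exists_lt_of_sum_lt h
      exact ⟨j, hj, Or.inr hlt⟩
  obtain ⟨hj1, hjd⟩ := mem_Icc.1 hj₀
  by_contra! hslack
  exact (cost_dropServer_lt (hl0 j₀ hj1 hjd) (hβ0 j₀ hj1 hjd).le hj₀ hs hj₀x).not_ge
    (hopt.2 _ (hopt.1.dropServer hslack))

end DropServer

theorem power_change_iff_job_change_general (T d : ℕ) (m lam : ℕ → ℕ) (β l : ℕ → ℝ)
    (hl0 : ∀ j, 1 ≤ j → j ≤ d → 0 < l j)
    (hβ0 : ∀ j, 1 ≤ j → j ≤ d → 0 < β j)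
    (x : ℕ → ℕ → ℕ) (hopt : Optimal T d m lam β l x)
    (t k : ℕ) (ht1 : 2 ≤ t) (htT : t ≤ T) :
    (0 < lane d x (t - 1) k → lane d x t k = 0 → k ≤ lam (t - 1) ∧ lam t < k) ∧
    (lane d x (t - 1) k = 0 → 0 < lane d x t k → lam (t - 1) < k ∧ k ≤ lam t) := by
  have hprev : t - 1 ∈ Icc 1 T := mem_Icc.2 ⟨by omega, by omega⟩
  have hcur : t ∈ Icc 1 T := mem_Icc.2 ⟨by omega, htT⟩
  have hdemand (s : ℕ) (hs : s ∈ Icc 1 T) := (hopt.1.2.2 s hs).1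
  refine ⟨fun hpos hzero => ?_, fun hzero hpos => ?_⟩
  · obtain ⟨hd, hk⟩ := (lane_pos_iff d x (t - 1) k).1 hpos
    have hlt := sum_lt_of_lane_eq_zero hd hzero
    have := hopt.sum_le_demand hl0 hβ0 hprev
      (Or.inr (by rw [Nat.sub_add_cancel (by omega)]; omega))
    have := hdemand t hcur
    omega
  · obtain ⟨hd, hk⟩ := (lane_pos_iff d x t k).1 hpos
    have hlt := sum_lt_of_lane_eq_zero hd hzero
    have := hopt.sum_le_demand hl0 hβ0 hcur (Or.inl (by omega))
    have := hdemand (t - 1) hprev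
    omega

/-- In an optimal schedule (strictly positive operating costs), if a server
in lane `k` is powered down after time `t-1` (`lane (t-1) k > 0`, `lane t k = 0`), then
there was a job in lane `k` at time `t-1` and none at time `t` (`λ_{t-1} ≥ k`, `λ_t < k`);
symmetrically, if `lane (t-1) k = 0` and `lane t k > 0`, then `λ_{t-1} < k` and `λ_t ≥ k`. -/
theorem power_change_iff_job_change (T d : ℕ) (m lam : ℕ → ℕ) (β l : ℕ → ℝ)
    (hl : ∀ j j', 1 ≤ j → j < j' → j' ≤ d → l j' < l j)
    (hl0 : ∀ j, 1 ≤ j → j ≤ d → 0 < l j)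
    (hβ : ∀ j j', 1 ≤ j → j < j' → j' ≤ d → β j < β j')
    (hβ0 : ∀ j, 1 ≤ j → j ≤ d → 0 < β j)
    (x : ℕ → ℕ → ℕ) (hopt : Optimal T d m lam β l x)
    (t k : ℕ) (ht1 : 2 ≤ t) (htT : t ≤ T) :
    (0 < lane d x (t - 1) k → lane d x t k = 0 → k ≤ lam (t - 1) ∧ lam t < k) ∧
    (lane d x (t - 1) k = 0 → 0 < lane d x t k → lam (t - 1) < k ∧ k ≤ lam t) :=
  power_change_iff_job_change_general T d m lam β l hl0 hβ0 x hopt t k ht1 htT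
end

section
/- Let X̂^u and X̂^v be feasible schedules for the problem instances I^u and I^v (u < v, same jobs λ_1..λ_u as prefix). Then the pointwise minimum schedule defined by y^min_{t,k} := min{ŷ^u_{t,k}, ŷ^v_{t,k}} is feasible for I^u. -/
open Finset

/-- A lane-representation schedule `y` (where `y t k ∈ {0,…,d}` is the server type
serving lane `k` at time `t`, and `0` means no active server) is feasible for the
truncated instance with horizon `T`, `d` server types, `m j` servers of type `j`,
`mtot` lanes and job volumes `lam`:
* all lanes are empty at time `0` and after time `T`, and beyond lane `mtot`;
* demand: lane `k` has an active server whenever `k ≤ lam t`;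
* server types are in `{0,…,d}` and sorted in descending order of lanes;
* at most `m j` lanes use server type `j` at any time. -/
def LaneFeasible (T d mtot : ℕ) (m lam : ℕ → ℕ) (y : ℕ → ℕ → ℕ) : Prop :=
  (∀ k, y 0 k = 0) ∧
  (∀ t k, T < t → y t k = 0) ∧
  (∀ t k, mtot < k → y t k = 0) ∧
  (∀ t ∈ Finset.Icc 1 T, ∀ k ∈ Finset.Icc 1 mtot, k ≤ lam t → 1 ≤ y t k) ∧
  (∀ t k, y t k ≤ d) ∧
  (∀ t k k', k ≤ k' → y t k' ≤ y t k) ∧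
  (∀ t j, 1 ≤ j →
    ((Finset.Icc 1 mtot).filter (fun k => y t k = j)).card ≤ m j)

/-- The cost of lane-schedule `y` in lane `k` at time slot `t`: operating cost of the
server type used there, plus switching cost if the server type changed. -/
noncomputable def laneCostTK (β l : ℕ → ℝ) (y : ℕ → ℕ → ℕ) (t k : ℕ) : ℝ :=
  if y t k = 0 then 0
  else if y (t - 1) k = y t k then l (y t k)
  else l (y t k) + β (y t k)

/-- Total cost of a lane-representation schedule over horizon `T` and `mtot` lanes. -/
noncomputable def laneCost (T mtot : ℕ) (β l : ℕ → ℝ) (y : ℕ → ℕ → ℕ) : ℝ :=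
  ∑ t ∈ Finset.Icc 1 T, ∑ k ∈ Finset.Icc 1 mtot, laneCostTK β l y t k

/-- An optimal lane-representation schedule: feasible of minimum cost. -/
def LaneOptimal (T d mtot : ℕ) (m lam : ℕ → ℕ) (β l : ℕ → ℝ) (y : ℕ → ℕ → ℕ) : Prop :=
  LaneFeasible T d mtot m lam y ∧
  ∀ y', LaneFeasible T d mtot m lam y' →
    laneCost T mtot β l y ≤ laneCost T mtot β l y'

/-- Witnesses against both inclusions would contradict antitonicity of one function at whichever
witness is the larger. -/
theorem Antitone.setOf_min_eq_subset_or {α β : Type*} [LinearOrder α] [LinearOrder β]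
    {f g : α → β} (hf : Antitone f) (hg : Antitone g) (j : β) :
    {k | min (f k) (g k) = j} ⊆ {k | f k = j} ∨ {k | min (f k) (g k) = j} ⊆ {k | g k = j} := by
  by_contra! h
  obtain ⟨a, ha, hfa⟩ := Set.not_subset.1 h.1
  obtain ⟨b, hb, hgb⟩ := Set.not_subset.1 h.2
  simp only [Set.mem_ofPred_eq] at ha hb hfa hgb
  have hga : g a = j := (min_choice (f a) (g a)).resolve_left (by rw [ha]; exact Ne.symm hfa) ▸ ha
  have hfb : f b = j := (min_choice (f b) (g b)).resolve_right (by rw [hb]; exact Ne.symm hgb) ▸ hb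
  have hjfa : j < f a := lt_of_le_of_ne (ha ▸ min_le_left _ _) (Ne.symm hfa)
  have hjgb : j < g b := lt_of_le_of_ne (hb ▸ min_le_right _ _) (Ne.symm hgb)
  rcases le_total a b with hab | hba
  · exact (hg hab).not_gt (hga ▸ hjgb)
  · exact (hf hba).not_gt (hfb ▸ hjfa)

theorem Antitone.card_filter_min_eq_le {α β : Type*} [LinearOrder α] [LinearOrder β]
    {f g : α → β} (hf : Antitone f) (hg : Antitone g) (s : Finset α) (j : β) :
    #{k ∈ s | min (f k) (g k) = j} ≤ max #{k ∈ s | f k = j} #{k ∈ s | g k = j} := by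
  rcases hf.setOf_min_eq_subset_or hg j with h | h
  · exact le_max_of_le_left (card_le_card (monotone_filter_right s fun _ _ hk => h hk))
  · exact le_max_of_le_right (card_le_card (monotone_filter_right s fun _ _ hk => h hk))

/-- If `ŷᵘ` and `ŷᵛ` are feasible lane-schedules for the truncated
instances `Iᵘ` and `Iᵛ` (`u < v`, same job sequence `lam`), then the pointwise minimum
schedule `y^min t k := min (ŷᵘ t k) (ŷᵛ t k)` is feasible for `Iᵘ`. -/
theorem min_schedule_feasible (u v d mtot : ℕ) (m lam : ℕ → ℕ)
    (huv : u < v) (yu yv : ℕ → ℕ → ℕ)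
    (hu : LaneFeasible u d mtot m lam yu) (hv : LaneFeasible v d mtot m lam yv) :
    LaneFeasible u d mtot m lam (fun t k => min (yu t k) (yv t k)) := by
  obtain ⟨hu0, huT, huM, hu_dem, hu_d, hu_sort, hu_card⟩ := hu
  obtain ⟨-, -, -, hv_dem, -, hv_sort, hv_card⟩ := hv
  refine ⟨fun k => by simp [hu0 k], fun t k ht => by simp [huT t k ht],
    fun t k hk => by simp [huM t k hk], ?_, fun t k => min_le_of_left_le (hu_d t k),
    fun t k k' hkk' => min_le_min (hu_sort t k k' hkk') (hv_sort t k k' hkk'), ?_⟩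
  · intro t ht k hk hkl
    have htv : t ∈ Icc 1 v := mem_Icc.2 ⟨(mem_Icc.1 ht).1, (mem_Icc.1 ht).2.trans huv.le⟩
    exact le_min (hu_dem t ht k hk hkl) (hv_dem t htv k hk hkl)
  · intro t j hj
    have hu_anti : Antitone (yu t) := fun _ _ hkk' => hu_sort t _ _ hkk'
    have hv_anti : Antitone (yv t) := fun _ _ hkk' => hv_sort t _ _ hkk'
    exact (hu_anti.card_filter_min_eq_le hv_anti _ j).trans
      (max_le (hu_card t j hj) (hv_card t j hj))
end

section
/- Let γ be drawn from [0,1] with density f(x) = e^x/(e-1), let β, l > 0 and let τ ≤ ⌊β/l⌋ be a positive integer, and set q := (l/β)·τ ∈ (0,1]. Then ∫_0^q f(x)(β + l⌊x·β/l⌋) dx + ∫_q^1 f(x)·l·τ dx ≤ l·τ·e/(e-1). -/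
/-!
Bounding `l * ⌊x β / l⌋` by `β x` dominates the first integrand by `β (1 + x) eˣ / (e - 1)`,
whose antiderivative is `β x eˣ / (e - 1)`. Since `β q = l τ`, the two integrals then add up
to `l τ (e^q + (e - e^q)) / (e - 1) = l τ e / (e - 1)`.
-/

open Real

lemma integral_exp_mul_one_add (a b : ℝ) :
    ∫ x in a..b, exp x * (1 + x) = b * exp b - a * exp a := by
  have hderiv (x : ℝ) : HasDerivAt (fun y => y * exp y) (exp x * (1 + x)) x :=
    ((hasDerivAt_id' x).mul (hasDerivAt_exp x)).congr_deriv (by ring)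
  exact intervalIntegral.integral_eq_sub_of_hasDerivAt (fun x _ => hderiv x)
    ((by fun_prop : Continuous fun x => exp x * (1 + x)).intervalIntegrable _ _)

lemma mul_natFloor_div_le {l y : ℝ} (hl : 0 < l) (hy : 0 ≤ y) : l * ⌊y / l⌋₊ ≤ y :=
  (le_div_iff₀' hl).1 (Nat.floor_le (div_nonneg hy hl.le))

section BlockCost

variable {β l : ℝ} (hβ : 0 < β) (hl : 0 < l)
include hβ hl

lemma monotone_exp_mul_add_mul_natFloor :
    Monotone fun x => exp x * (β + l * ⌊x * β / l⌋₊) :=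
  Monotone.mul (fun _ _ => exp_le_exp.2) (fun _ _ _ => by gcongr)
    (fun _ => (exp_pos _).le) (fun _ => by positivity)

lemma integral_exp_mul_add_mul_natFloor_le {q : ℝ} (hq : 0 ≤ q) :
    ∫ x in (0 : ℝ)..q, exp x * (β + l * ⌊x * β / l⌋₊) ≤ β * (q * exp q) := by
  calc ∫ x in (0 : ℝ)..q, exp x * (β + l * ⌊x * β / l⌋₊)
      ≤ ∫ x in (0 : ℝ)..q, β * (exp x * (1 + x)) := by
        refine intervalIntegral.integral_mono_on hq
          ((monotone_exp_mul_add_mul_natFloor hβ hl).intervalIntegrable)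
          ((by fun_prop : Continuous fun x => β * (exp x * (1 + x))).intervalIntegrable _ _)
          fun x hx => ?_
        have := mul_natFloor_div_le hl (mul_nonneg hx.1 hβ.le)
        nlinarith [exp_pos x]
    _ = β * (q * exp q) := by
        rw [intervalIntegral.integral_const_mul, integral_exp_mul_one_add]
        simp

end BlockCost

theorem expected_block_cost_general (β l : ℝ) (hβ : 0 < β) (hl : 0 < l)
    (τ : ℕ)
    (q : ℝ) (hq : q = l / β * τ) :
    (∫ x in (0:ℝ)..q,
        (Real.exp x / (Real.exp 1 - 1)) * (β + l * (Nat.floor (x * β / l) : ℝ)))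
      + (∫ x in q..(1:ℝ), (Real.exp x / (Real.exp 1 - 1)) * (l * τ))
    ≤ l * τ * (Real.exp 1 / (Real.exp 1 - 1)) := by
  have he : 0 < exp 1 - 1 := by linarith [add_one_lt_exp one_ne_zero]
  have hfirst := integral_exp_mul_add_mul_natFloor_le hβ hl (hq ▸ by positivity : 0 ≤ q)
  have hβq : β * (q * exp q) = l * τ * exp q := by rw [hq]; field_simp
  simp_rw [div_mul_eq_mul_div, intervalIntegral.integral_div, intervalIntegral.integral_mul_const,
    integral_exp]
  rw [← add_div, mul_div_assoc', div_le_div_iff_of_pos_right he]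
  linarith

/-- Let `γ` be drawn from `[0,1]` with density `f x = eˣ/(e-1)`, let
`β, l > 0`, let `τ` be a positive integer with `τ ≤ ⌊β/l⌋`, and set `q := (l/β)·τ`.
Then `∫_0^q f(x)·(β + l·⌊x·β/l⌋) dx + ∫_q^1 f(x)·l·τ dx ≤ l·τ·e/(e-1)`. -/
theorem expected_block_cost (β l : ℝ) (hβ : 0 < β) (hl : 0 < l)
    (τ : ℕ) (hτ : 0 < τ) (hτβ : τ ≤ Nat.floor (β / l))
    (q : ℝ) (hq : q = l / β * τ) :
    (∫ x in (0:ℝ)..q,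
        (Real.exp x / (Real.exp 1 - 1)) * (β + l * (Nat.floor (x * β / l) : ℝ)))
      + (∫ x in q..(1:ℝ), (Real.exp x / (Real.exp 1 - 1)) * (l * τ))
    ≤ l * τ * (Real.exp 1 / (Real.exp 1 - 1)) :=
  expected_block_cost_general β l hβ hl τ q hq
end

section
/- For a single server type with switching cost β > 0 and operating cost l > 0 with l ≤ β/N^4 · (relative scale), any deterministic online schedule over t time slots that powers up the server n ≥ N/8 times (forced by the adversary who issues a job exactly when the algorithm has no active server) has cost n·β + l·(t - n + 1) ≥ (2 - 9/N)·C*, where C* = min{β + l·t, n·(β + l)} upper-bounds the optimal offline cost. -/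
/-!
Write `C₁ = β + l t` (server always on) and `C₂ = n (β + l)` (server on only in the `n` job
slots). The online cost `ALG` satisfies `ALG + β + (2n - 1) l = C₁ + C₂`. For `ε ≤ 1`,
`(2 - ε) min C₁ C₂ ≤ C₁ + (1 - ε) C₂`, so `ALG ≥ (2 - ε) min C₁ C₂` as soon as
`ε C₂ ≥ β + (2n - 1) l`; with `β = N²`, `l = 1/N²`, `ε = 9/N` this is where `n ≥ N/8` enters.
For `ε ≥ 1` already `min C₁ C₂ ≤ C₁ ≤ ALG`.
-/

namespace SingleServer

variable (β l n t : ℝ)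

/-- The online schedule pays `β` for each of its `n` power-ups and runs in all but the
`n - 1` slots that precede a restart. -/
def onlineCost : ℝ := n * β + l * (t - n + 1)

def offlineCost : ℝ := min (β + l * t) (n * (β + l))

variable {β l n t}

theorem offlineCost_nonneg (hβ : 0 ≤ β) (hl : 0 ≤ l) (hn : 0 ≤ n) (ht : 0 ≤ t) :
    0 ≤ offlineCost β l n t :=
  le_min (by positivity) (by positivity)

theorem offlineCost_le_onlineCost (hlβ : l ≤ β) (hn : 1 ≤ n) :
    offlineCost β l n t ≤ onlineCost β l n t :=
  (min_le_left _ _).trans (by unfold onlineCost; nlinarith)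

theorem mul_offlineCost_le_onlineCost_of_le_one {c : ℝ} (hc : c ≤ 1) (hl : 0 ≤ l)
    (hlβ : l ≤ β) (hn : 1 ≤ n) (ht : 0 ≤ t) :
    c * offlineCost β l n t ≤ onlineCost β l n t := by
  have h₀ := offlineCost_nonneg (hl.trans hlβ) hl (zero_le_one.trans hn) ht
  calc c * offlineCost β l n t ≤ offlineCost β l n t := mul_le_of_le_one_left h₀ hc
    _ ≤ onlineCost β l n t := offlineCost_le_onlineCost hlβ hn

theorem two_sub_mul_offlineCost_le_onlineCost {ε : ℝ} (hε : ε ≤ 1)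
    (hmargin : β + (2 * n - 1) * l ≤ ε * (n * (β + l))) :
    (2 - ε) * offlineCost β l n t ≤ onlineCost β l n t := by
  have h₁ : offlineCost β l n t ≤ β + l * t := min_le_left _ _
  have h₂ : offlineCost β l n t ≤ n * (β + l) := min_le_right _ _
  calc (2 - ε) * offlineCost β l n t
      = offlineCost β l n t + (1 - ε) * offlineCost β l n t := by ring
    _ ≤ (β + l * t) + (1 - ε) * (n * (β + l)) := by gcongr
    _ = onlineCost β l n t + (β + (2 * n - 1) * l - ε * (n * (β + l))) := by
      unfold onlineCost; ring
    _ ≤ onlineCost β l n t := by linarith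

end SingleServer

theorem sq_add_le_nine_div_mul {N n : ℝ} (hN : 6 ≤ N) (hn : N / 8 ≤ n) :
    N ^ 2 + (2 * n - 1) * (1 / N ^ 2) ≤ 9 / N * (n * (N ^ 2 + 1 / N ^ 2)) := by
  have hN0 : 0 < N := by linarith
  have hn0 : 0 ≤ n := by linarith
  have hN3 : 2 ≤ N ^ 3 := by nlinarith [sq_nonneg N]
  have hnum : 0 ≤ 9 * n * N ^ 4 + 9 * n - N ^ 5 - 2 * n * N + N := by
    nlinarith [mul_le_mul_of_nonneg_right hn (by positivity : (0 : ℝ) ≤ N ^ 4),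
      mul_le_mul_of_nonneg_left hN3 (mul_nonneg hn0 hN0.le)]
  have hdiff : 9 / N * (n * (N ^ 2 + 1 / N ^ 2)) - (N ^ 2 + (2 * n - 1) * (1 / N ^ 2))
      = (9 * n * N ^ 4 + 9 * n - N ^ 5 - 2 * n * N + N) / N ^ 3 := by
    field_simp
    ring
  rw [← sub_nonneg, hdiff]
  exact div_nonneg hnum (by positivity)

open SingleServer in
theorem single_type_lower_bound_general (N : ℝ) (hN : 6 ≤ N) (t n : ℕ)
    (hn : N / 8 ≤ (n : ℝ)) :
    (2 - 9 / N) * min (N ^ 2 + 1 / N ^ 2 * (t : ℝ)) ((n : ℝ) * (N ^ 2 + 1 / N ^ 2))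
      ≤ (n : ℝ) * N ^ 2 + 1 / N ^ 2 * ((t : ℝ) - (n : ℝ) + 1) := by
  have hN0 : 0 < N := by linarith
  have hn1 : (1 : ℝ) ≤ n :=
    Nat.one_le_cast.mpr (Nat.cast_pos.mp (by linarith : (0 : ℝ) < n))
  rcases le_total N 9 with hN9 | hN9
  · have hε : 2 - 9 / N ≤ 1 := by linarith [(one_le_div hN0).mpr hN9]
    have hlβ : 1 / N ^ 2 ≤ N ^ 2 := by
      have : (1 : ℝ) ≤ N ^ 2 := by nlinarith
      exact (div_le_one₀ (by positivity)).mpr this |>.trans this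
    exact mul_offlineCost_le_onlineCost_of_le_one hε (by positivity) hlβ hn1 t.cast_nonneg
  · exact two_sub_mul_offlineCost_le_onlineCost ((div_le_one hN0).mpr hN9)
      (sq_add_le_nine_div_mul hN hn)

/-- Lower-bound construction for a single server type with switching cost
`β = N²` and operating cost `l = 1/N²`, `N ≥ 6`. If a deterministic online schedule
over `t` time slots powers the server up `n ≥ N/8` times (with `n ≤ t`, as forced by
the adversary who issues a job exactly when the algorithm has no active server), then
its cost `n·β + l·(t - n + 1)` is at least `(2 - 9/N)` times
`C* = min {β + l·t, n·(β + l)}`, which upper-bounds the optimal offline cost. -/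
theorem single_type_lower_bound (N : ℝ) (hN : 6 ≤ N) (t n : ℕ)
    (hn : N / 8 ≤ (n : ℝ)) (hnt : n ≤ t) :
    (2 - 9 / N) * min (N ^ 2 + 1 / N ^ 2 * (t : ℝ)) ((n : ℝ) * (N ^ 2 + 1 / N ^ 2))
      ≤ (n : ℝ) * N ^ 2 + 1 / N ^ 2 * ((t : ℝ) - (n : ℝ) + 1) :=
  single_type_lower_bound_general N hN t n hn
end

section
/- In the schedule produced by the deterministic online algorithm A, for every time slot t the server types in the lanes are sorted in descending order: y^A_{t,k} ≥ y^A_{t,k'} for all k < k'. -/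
/-!
Besides the sortedness of the server types, algorithm `A` keeps the expiry times sorted across
lanes, and each expiry time is at most `t + t̄` of the lane's current type. Both are preserved
by one step because `t̄` is monotone and the targets `ŷ^t_{t,·}` are sorted. The only delicate
case is a lane `k` that is replaced while a later lane `k'` keeps its server: then `k'` has not
expired, hence neither has `k`, so `k` was replaced by a strictly larger type `ŷ^t_{t,k}`, which
dominates the old type of `k'` and, through `t̄`, its expiry time.
-/

/-- `tbar β l j = ⌊β j / l j⌋` is the number of time slots a server of type `j ≥ 1`
stays active in algorithm `A` (with `tbar 0 = 0` for "no server"). -/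
noncomputable def tbar (β l : ℕ → ℝ) (j : ℕ) : ℕ :=
  if j = 0 then 0 else Nat.floor (β j / l j)

/-- The state of algorithm `A` after time slot `t`: for each lane `k`, the pair
`(run t).1 k` (currently active server type, `0` = none) and `(run t).2 k` (the expiry
time slot at which that server will be powered down). At time `t`, given the optimal
truncated schedule `X̂^t` with final-slot lane types `Yhat t t k`, the algorithm
upgrades the server in lane `k` to `Yhat t t k` if the current type is smaller or the
expiry time has been reached, and otherwise keeps it and extends the expiry time by
`tbar (Yhat t t k)`. -/
noncomputable def run (β l : ℕ → ℝ) (Yhat : ℕ → ℕ → ℕ → ℕ) : ℕ → (ℕ → ℕ) × (ℕ → ℕ)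
  | 0 => (fun _ => 0, fun _ => 0)
  | t + 1 =>
    let s := run β l Yhat t
    let Y := fun k => Yhat (t + 1) (t + 1) k
    (fun k => if s.1 k < Y k ∨ s.2 k ≤ t + 1 then Y k else s.1 k,
     fun k =>
       if s.1 k < Y k ∨ s.2 k ≤ t + 1 then t + 1 + tbar β l (Y k)
       else max (s.2 k) (t + 1 + tbar β l (Y k)))

/-- The lane-representation schedule `y^A` computed by algorithm `A`. -/
noncomputable def yAlg (β l : ℕ → ℝ) (Yhat : ℕ → ℕ → ℕ → ℕ) (t k : ℕ) : ℕ :=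
  (run β l Yhat t).1 k

section Tbar

variable {d : ℕ} {β l : ℕ → ℝ}

theorem tbar_monotoneOn
    (hl : ∀ j j', 1 ≤ j → j < j' → j' ≤ d → l j' < l j)
    (hl0 : ∀ j, 1 ≤ j → j ≤ d → 0 < l j)
    (hβ : ∀ j j', 1 ≤ j → j < j' → j' ≤ d → β j < β j')
    (hβ0 : ∀ j, 1 ≤ j → j ≤ d → 0 < β j) :
    MonotoneOn (tbar β l) (Set.Iic d) := by
  intro j _ j' (hj'd : j' ≤ d) hjj'
  rcases Nat.eq_zero_or_pos j with rfl | hj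
  · simp [tbar]
  rcases hjj'.eq_or_lt with rfl | hlt
  · rfl
  have hj' : 1 ≤ j' := hj.trans_le hjj'
  have hratio : β j / l j ≤ β j' / l j' :=
    div_le_div₀ (hβ0 j' hj' hj'd).le (hβ j j' hj hlt hj'd).le (hl0 j' hj' hj'd)
      (hl j j' hj hlt hj'd).le
  simp only [tbar, if_neg hj.ne', if_neg (by omega : j' ≠ 0)]
  exact Nat.floor_le_floor hratio

end Tbar

/-- One lane of algorithm `A` at slot `t`: `y` and `e` are its current server type and expiry
time, `Y` the target type, `τ` the lifetime of a server type. -/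
def laneUpdate (τ : ℕ → ℕ) (t Y y e : ℕ) : ℕ × ℕ :=
  if y < Y ∨ e ≤ t then (Y, t + τ Y) else (y, max e (t + τ Y))

theorem run_succ (β l : ℕ → ℝ) (Yhat : ℕ → ℕ → ℕ → ℕ) (t : ℕ) :
    run β l Yhat (t + 1) =
      (fun k => (laneUpdate (tbar β l) (t + 1) (Yhat (t + 1) (t + 1) k)
          ((run β l Yhat t).1 k) ((run β l Yhat t).2 k)).1,
        fun k => (laneUpdate (tbar β l) (t + 1) (Yhat (t + 1) (t + 1) k)
          ((run β l Yhat t).1 k) ((run β l Yhat t).2 k)).2) := by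
  simp only [run, laneUpdate, apply_ite Prod.fst, apply_ite Prod.snd]

section LaneUpdate

variable {τ : ℕ → ℕ} {d : ℕ}

theorem laneUpdate_fst_le {t Y y e : ℕ} (hYd : Y ≤ d) (hyd : y ≤ d) :
    (laneUpdate τ t Y y e).1 ≤ d := by
  unfold laneUpdate
  split_ifs <;> assumption

theorem laneUpdate_snd_le (hτ : MonotoneOn τ (Set.Iic d)) {t Y y e : ℕ}
    (hYd : Y ≤ d) (hyd : y ≤ d) (he : e ≤ t + τ y) :
    (laneUpdate τ (t + 1) Y y e).2 ≤ t + 1 + τ (laneUpdate τ (t + 1) Y y e).1 := by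
  unfold laneUpdate
  split_ifs
  · exact le_rfl
  · have hτY : τ Y ≤ τ y := hτ hYd hyd (by omega)
    dsimp only
    omega

theorem laneUpdate_le_laneUpdate (hτ : MonotoneOn τ (Set.Iic d)) {t Y Y' y y' e e' : ℕ}
    (hY : Y' ≤ Y) (hYd : Y ≤ d) (hy : y' ≤ y) (hyd : y ≤ d) (he : e' ≤ e)
    (heτ : e ≤ t + τ y) :
    (laneUpdate τ (t + 1) Y' y' e').1 ≤ (laneUpdate τ (t + 1) Y y e).1 ∧
      (laneUpdate τ (t + 1) Y' y' e').2 ≤ (laneUpdate τ (t + 1) Y y e).2 := by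
  have hτY : τ Y' ≤ τ Y := hτ (hY.trans hYd) hYd hY
  have hτy : y < Y → τ y ≤ τ Y := fun h => hτ hyd hYd h.le
  unfold laneUpdate
  split_ifs <;> dsimp only <;> omega

end LaneUpdate

structure LanesInvariant (τ : ℕ → ℕ) (d t : ℕ) (y e : ℕ → ℕ) : Prop where
  type_le : ∀ k, y k ≤ d
  expiry_le : ∀ k, e k ≤ t + τ (y k)
  type_antitone : Antitone y
  expiry_antitone : Antitone e

theorem run_lanesInvariant {d : ℕ} {β l : ℕ → ℝ} (htbar : MonotoneOn (tbar β l) (Set.Iic d))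
    {Yhat : ℕ → ℕ → ℕ → ℕ} (hrange : ∀ t k, Yhat t t k ≤ d)
    (hsorted : ∀ t, Antitone (Yhat t t)) (t : ℕ) :
    LanesInvariant (tbar β l) d t (run β l Yhat t).1 (run β l Yhat t).2 := by
  induction t with
  | zero => exact ⟨fun _ => Nat.zero_le d, fun _ => by simp [run, tbar], fun _ _ _ => le_rfl,
      fun _ _ _ => le_rfl⟩
  | succ t ih =>
    have hpair {k k' : ℕ} (hk : k ≤ k') :=
      laneUpdate_le_laneUpdate htbar (hsorted (t + 1) hk) (hrange _ k) (ih.type_antitone hk)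
        (ih.type_le k) (ih.expiry_antitone hk) (ih.expiry_le k)
    rw [run_succ]
    exact ⟨fun k => laneUpdate_fst_le (hrange _ k) (ih.type_le k),
      fun k => laneUpdate_snd_le htbar (hrange _ k) (ih.type_le k) (ih.expiry_le k),
      fun _ _ hk => (hpair hk).1, fun _ _ hk => (hpair hk).2⟩

theorem alg_lanes_sorted_general (d : ℕ) (β l : ℕ → ℝ)
    (hl : ∀ j j', 1 ≤ j → j < j' → j' ≤ d → l j' < l j)
    (hl0 : ∀ j, 1 ≤ j → j ≤ d → 0 < l j)
    (hβ : ∀ j j', 1 ≤ j → j < j' → j' ≤ d → β j < β j')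
    (hβ0 : ∀ j, 1 ≤ j → j ≤ d → 0 < β j)
    (Yhat : ℕ → ℕ → ℕ → ℕ)
    (hrange : ∀ t t' k, Yhat t t' k ≤ d)
    (hsorted : ∀ t k k', k ≤ k' → Yhat t t k' ≤ Yhat t t k) :
    ∀ t k k', k ≤ k' → yAlg β l Yhat t k' ≤ yAlg β l Yhat t k := fun t _ _ hk =>
  (run_lanesInvariant (tbar_monotoneOn hl hl0 hβ hβ0) (fun t => hrange t t)
    (fun t _ _ => hsorted t _ _) t).type_antitone hk

/-- In the schedule produced by the deterministic online algorithm `A`,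
for every time slot the server types in the lanes are sorted in descending order.
Hypotheses: server types `1,…,d` have sorted costs (`l` strictly decreasing and
positive, `β` strictly increasing and positive), the reference schedules `X̂^t` take
values in `{0,…,d}`, have sorted final-slot lanes, and dominate their predecessors. -/
theorem alg_lanes_sorted (d : ℕ) (β l : ℕ → ℝ)
    (hl : ∀ j j', 1 ≤ j → j < j' → j' ≤ d → l j' < l j)
    (hl0 : ∀ j, 1 ≤ j → j ≤ d → 0 < l j)
    (hβ : ∀ j j', 1 ≤ j → j < j' → j' ≤ d → β j < β j')
    (hβ0 : ∀ j, 1 ≤ j → j ≤ d → 0 < β j)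
    (Yhat : ℕ → ℕ → ℕ → ℕ)
    (hrange : ∀ t t' k, Yhat t t' k ≤ d)
    (hsorted : ∀ t k k', k ≤ k' → Yhat t t k' ≤ Yhat t t k)
    (hdom : ∀ t t' k, Yhat t t' k ≤ Yhat (t + 1) t' k) :
    ∀ t k k', k ≤ k' → yAlg β l Yhat t k' ≤ yAlg β l Yhat t k :=
  alg_lanes_sorted_general d β l hl hl0 hβ hβ0 Yhat hrange hsorted
end
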